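/- Let A be a po-group with RDP such that for any two non-comparable elements a,b ∈ A⁺\{0} there exists d' ∈ A with 0 < d' ≤ a, d' ≤ b, a+d' = d'+a and b+d' = d'+b. Let G be a directed po-group with RDP. Then the lexicographic product A ×⃗ G satisfies RDP. -/

import Mathlib

/-!
If `a₁ < b₁` (or `b₁ < a₁`) for `p₁ = (a₁, g₁)` and `q₁ = (b₁, h₁)`, then `p₁, 0, -p₁ + q₁, q₂`
is a decomposition. If `a₁ = b₁`, the `G`-coordinates are decomposed by RDP in `G`, with lower
bounds for the diagonal entries that must be `0` only where the `A`-coordinate is `0`.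
If `a₁, b₁` are incomparable, so are `a₂, b₂`. Splitting off strictly positive common lower
bounds `d₁` of `a₁, b₁` and `d₂` of `a₂, b₂` before applying RDP in `A` makes the diagonal
entries `c₁₁ ≥ d₁`, `c₂₂ ≥ d₂` strictly positive, so their `G`-coordinates are unconstrained,
and directedness of `G` leaves enough room to decompose the `G`-coordinates.
-/

/-- A po-group satisfies RDP if every equation `a₁ + a₂ = b₁ + b₂` of positive elements
admits a Riesz decomposition by four positive elements. -/
def RDP (G : Type*) [AddGroup G] [PartialOrder G] : Prop :=
  ∀ a₁ a₂ b₁ b₂ : G, 0 ≤ a₁ → 0 ≤ a₂ → 0 ≤ b₁ → 0 ≤ b₂ → a₁ + a₂ = b₁ + b₂ →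
    ∃ c₁₁ c₁₂ c₂₁ c₂₂ : G, 0 ≤ c₁₁ ∧ 0 ≤ c₁₂ ∧ 0 ≤ c₂₁ ∧ 0 ≤ c₂₂ ∧
      a₁ = c₁₁ + c₁₂ ∧ a₂ = c₂₁ + c₂₂ ∧ b₁ = c₁₁ + c₂₁ ∧ b₂ = c₁₂ + c₂₂

section Riesz

variable {G : Type*} [AddGroup G] [PartialOrder G]

def HasRieszDecomp (a₁ a₂ b₁ b₂ : G) : Prop :=
  ∃ c₁₁ c₁₂ c₂₁ c₂₂ : G, 0 ≤ c₁₁ ∧ 0 ≤ c₁₂ ∧ 0 ≤ c₂₁ ∧ 0 ≤ c₂₂ ∧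
    a₁ = c₁₁ + c₁₂ ∧ a₂ = c₂₁ + c₂₂ ∧ b₁ = c₁₁ + c₂₁ ∧ b₂ = c₁₂ + c₂₂

theorem HasRieszDecomp.symm {a₁ a₂ b₁ b₂ : G} (h : HasRieszDecomp a₁ a₂ b₁ b₂) :
    HasRieszDecomp b₁ b₂ a₁ a₂ := by
  obtain ⟨c₁₁, c₁₂, c₂₁, c₂₂, h₁₁, h₁₂, h₂₁, h₂₂, ha₁, ha₂, hb₁, hb₂⟩ := h
  exact ⟨c₁₁, c₂₁, c₁₂, c₂₂, h₁₁, h₂₁, h₁₂, h₂₂, hb₁, hb₂, ha₁, ha₂⟩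

theorem hasRieszDecomp_of_neg_add_nonneg {a₁ a₂ b₁ b₂ : G} (ha₁ : 0 ≤ a₁) (hb₂ : 0 ≤ b₂)
    (h : 0 ≤ -a₁ + b₁) (hsum : a₁ + a₂ = b₁ + b₂) : HasRieszDecomp a₁ a₂ b₁ b₂ :=
  ⟨a₁, 0, -a₁ + b₁, b₂, ha₁, le_rfl, h, hb₂, (add_zero a₁).symm,
    by rw [add_assoc, ← hsum, neg_add_cancel_left], (add_neg_cancel_left a₁ b₁).symm,
    (zero_add b₂).symm⟩

variable [AddLeftMono G] [AddRightMono G]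

theorem RDP.exists_decomp_of_lowerBounds (hG : RDP G) {g₁ g₂ h₁ h₂ ℓ m : G}
    (hsum : g₁ + g₂ = h₁ + h₂) (hg₁ : ℓ ≤ g₁) (hh₁ : ℓ ≤ h₁) (hg₂ : m ≤ g₂) (hh₂ : m ≤ h₂) :
    ∃ k₁₁ k₁₂ k₂₁ k₂₂ : G, ℓ ≤ k₁₁ ∧ 0 ≤ k₁₂ ∧ 0 ≤ k₂₁ ∧ m ≤ k₂₂ ∧
      g₁ = k₁₁ + k₁₂ ∧ g₂ = k₂₁ + k₂₂ ∧ h₁ = k₁₁ + k₂₁ ∧ h₂ = k₁₂ + k₂₂ := by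
  have hsum' : -ℓ + g₁ + (g₂ - m) = -ℓ + h₁ + (h₂ - m) := by
    rw [add_assoc, ← add_sub_assoc, hsum, add_sub_assoc, ← add_assoc]
  obtain ⟨c₁₁, c₁₂, c₂₁, c₂₂, h₁₁, h₁₂, h₂₁, h₂₂, e₁, e₂, e₃, e₄⟩ :=
    hG _ _ _ _ (le_neg_add_iff_le.mpr hg₁) (sub_nonneg.mpr hg₂) (le_neg_add_iff_le.mpr hh₁)
      (sub_nonneg.mpr hh₂) hsum'
  refine ⟨ℓ + c₁₁, c₁₂, c₂₁, c₂₂ + m, le_add_of_nonneg_right h₁₁, h₁₂, h₂₁,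
    le_add_of_nonneg_left h₂₂, ?_, ?_, ?_, ?_⟩
  · rw [add_assoc, ← e₁, add_neg_cancel_left]
  · rw [← add_assoc, ← e₂, sub_add_cancel]
  · rw [add_assoc, ← e₃, add_neg_cancel_left]
  · rw [← add_assoc, ← e₄, sub_add_cancel]

theorem exists_le_le_of_directed (hdir : ∀ x y : G, ∃ z : G, x ≤ z ∧ y ≤ z) (x y : G) :
    ∃ z : G, z ≤ x ∧ z ≤ y := by
  obtain ⟨z, hx, hy⟩ := hdir (-x) (-y)
  exact ⟨-z, neg_le.mp hx, neg_le.mp hy⟩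

theorem le_of_add_eq_add_of_le {a₁ a₂ b₁ b₂ : G} (hsum : a₁ + a₂ = b₁ + b₂) (h : a₂ ≤ b₂) :
    b₁ ≤ a₁ :=
  le_of_add_le_add_right <| calc
    b₁ + b₂ = a₁ + a₂ := hsum.symm
    _ ≤ a₁ + b₂ := add_le_add le_rfl h

end Riesz

section Lex

variable {A G : Type*} [AddGroup A] [PartialOrder A] [AddGroup G] [PartialOrder G]

theorem toLex_nonneg_iff {a : A} {g : G} : 0 ≤ toLex (a, g) ↔ 0 < a ∨ 0 = a ∧ 0 ≤ g :=
  Prod.Lex.toLex_le_toLex (x := (0, 0))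

theorem toLex_nonneg_of_pos {a : A} (ha : 0 < a) (g : G) : 0 ≤ toLex (a, g) :=
  toLex_nonneg_iff.mpr (Or.inl ha)

theorem toLex_nonneg {a : A} {g : G} (ha : 0 ≤ a) (hg : 0 ≤ g) : 0 ≤ toLex (a, g) :=
  Prod.Lex.toLex_mono (a := (0, 0)) ⟨ha, hg⟩

theorem fst_nonneg_of_toLex_nonneg {a : A} {g : G} (h : 0 ≤ toLex (a, g)) : 0 ≤ a :=
  Prod.Lex.monotone_fst (toLex (0, 0)) _ h

theorem hasRieszDecomp_toLex {a₁ a₂ b₁ b₂ c₁₁ c₁₂ c₂₁ c₂₂ : A}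
    {g₁ g₂ h₁ h₂ k₁₁ k₁₂ k₂₁ k₂₂ : G}
    (h₁₁ : 0 ≤ toLex (c₁₁, k₁₁)) (h₁₂ : 0 ≤ toLex (c₁₂, k₁₂))
    (h₂₁ : 0 ≤ toLex (c₂₁, k₂₁)) (h₂₂ : 0 ≤ toLex (c₂₂, k₂₂))
    (hc : a₁ = c₁₁ + c₁₂ ∧ a₂ = c₂₁ + c₂₂ ∧ b₁ = c₁₁ + c₂₁ ∧ b₂ = c₁₂ + c₂₂)
    (hk : g₁ = k₁₁ + k₁₂ ∧ g₂ = k₂₁ + k₂₂ ∧ h₁ = k₁₁ + k₂₁ ∧ h₂ = k₁₂ + k₂₂) :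
    HasRieszDecomp (toLex (a₁, g₁)) (toLex (a₂, g₂)) (toLex (b₁, h₁)) (toLex (b₂, h₂)) := by
  obtain ⟨rfl, rfl, rfl, rfl⟩ := hc
  obtain ⟨rfl, rfl, rfl, rfl⟩ := hk
  exact ⟨_, _, _, _, h₁₁, h₁₂, h₂₁, h₂₂, rfl, rfl, rfl, rfl⟩

theorem neg_toLex_add_toLex_nonneg [AddLeftMono A] {a b : A} (hab : a < b) (g h : G) :
    0 ≤ -toLex (a, g) + toLex (b, h) := by
  rw [← toLex_neg, ← toLex_add, Prod.neg_mk, Prod.mk_add_mk]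
  exact toLex_nonneg_of_pos (lt_neg_add_iff_lt.mpr hab) _

variable [AddLeftMono G] [AddRightMono G]

theorem exists_lowerBound_toLex_nonneg (hdir : ∀ x y : G, ∃ z : G, x ≤ z ∧ y ≤ z) {a : A}
    {g h : G} (hg : 0 ≤ toLex (a, g)) (hh : 0 ≤ toLex (a, h)) :
    ∃ ℓ : G, ℓ ≤ g ∧ ℓ ≤ h ∧ ∀ k, ℓ ≤ k → 0 ≤ toLex (a, k) := by
  rcases toLex_nonneg_iff.mp hg with ha | ⟨rfl, hg₀⟩
  · obtain ⟨ℓ, hℓg, hℓh⟩ := exists_le_le_of_directed hdir g h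
    exact ⟨ℓ, hℓg, hℓh, fun k _ ↦ toLex_nonneg_of_pos ha k⟩
  · have hh₀ : 0 ≤ h := (toLex_nonneg_iff.mp hh).resolve_left (lt_irrefl 0) |>.2
    exact ⟨0, hg₀, hh₀, fun k hk ↦ toLex_nonneg le_rfl hk⟩

theorem hasRieszDecomp_toLex_of_fst_eq (hdir : ∀ x y : G, ∃ z : G, x ≤ z ∧ y ≤ z)
    (hG : RDP G) {a₁ a₂ : A} {g₁ g₂ h₁ h₂ : G}
    (hg₁ : 0 ≤ toLex (a₁, g₁)) (hg₂ : 0 ≤ toLex (a₂, g₂))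
    (hh₁ : 0 ≤ toLex (a₁, h₁)) (hh₂ : 0 ≤ toLex (a₂, h₂)) (hsum : g₁ + g₂ = h₁ + h₂) :
    HasRieszDecomp (toLex (a₁, g₁)) (toLex (a₂, g₂)) (toLex (a₁, h₁)) (toLex (a₂, h₂)) := by
  obtain ⟨ℓ, hℓg, hℓh, hℓ⟩ := exists_lowerBound_toLex_nonneg hdir hg₁ hh₁
  obtain ⟨m, hmg, hmh, hm⟩ := exists_lowerBound_toLex_nonneg hdir hg₂ hh₂
  obtain ⟨k₁₁, k₁₂, k₂₁, k₂₂, h₁₁, h₁₂, h₂₁, h₂₂, hk⟩ :=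
    hG.exists_decomp_of_lowerBounds hsum hℓg hℓh hmg hmh
  refine hasRieszDecomp_toLex (c₁₂ := 0) (c₂₁ := 0) (hℓ _ h₁₁) (toLex_nonneg le_rfl h₁₂)
    (toLex_nonneg le_rfl h₂₁) (hm _ h₂₂) ?_ hk
  simp only [add_zero, zero_add, and_self]

variable [AddLeftMono A] [AddRightMono A]

theorem hasRieszDecomp_toLex_of_incomparable (hA : RDP A)
    (hbound : ∀ a b : A, 0 ≤ a → 0 ≤ b → ¬ a ≤ b → ¬ b ≤ a → ∃ d : A, 0 < d ∧ d ≤ a ∧ d ≤ b)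
    (hdir : ∀ x y : G, ∃ z : G, x ≤ z ∧ y ≤ z) (hG : RDP G) {a₁ a₂ b₁ b₂ : A}
    {g₁ g₂ h₁ h₂ : G} (ha₁ : 0 ≤ a₁) (ha₂ : 0 ≤ a₂) (hb₁ : 0 ≤ b₁) (hb₂ : 0 ≤ b₂)
    (hab : ¬ a₁ ≤ b₁) (hba : ¬ b₁ ≤ a₁) (ha : a₁ + a₂ = b₁ + b₂) (hg : g₁ + g₂ = h₁ + h₂) :
    HasRieszDecomp (toLex (a₁, g₁)) (toLex (a₂, g₂)) (toLex (b₁, h₁)) (toLex (b₂, h₂)) := by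
  obtain ⟨d₁, hd₁, hd₁a, hd₁b⟩ := hbound a₁ b₁ ha₁ hb₁ hab hba
  obtain ⟨d₂, hd₂, hd₂a, hd₂b⟩ := hbound a₂ b₂ ha₂ hb₂
    (fun h ↦ hba (le_of_add_eq_add_of_le ha h)) (fun h ↦ hab (le_of_add_eq_add_of_le ha.symm h))
  obtain ⟨c₁₁, c₁₂, c₂₁, c₂₂, hc₁₁, hc₁₂, hc₂₁, hc₂₂, hc⟩ :=
    hA.exists_decomp_of_lowerBounds ha hd₁a hd₁b hd₂a hd₂b
  obtain ⟨ℓ, hℓg, hℓh⟩ := exists_le_le_of_directed hdir g₁ h₁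
  obtain ⟨m, hmg, hmh⟩ := exists_le_le_of_directed hdir g₂ h₂
  obtain ⟨k₁₁, k₁₂, k₂₁, k₂₂, -, hk₁₂, hk₂₁, -, hk⟩ :=
    hG.exists_decomp_of_lowerBounds hg hℓg hℓh hmg hmh
  exact hasRieszDecomp_toLex (toLex_nonneg_of_pos (hd₁.trans_le hc₁₁) k₁₁)
    (toLex_nonneg hc₁₂ hk₁₂) (toLex_nonneg hc₂₁ hk₂₁)
    (toLex_nonneg_of_pos (hd₂.trans_le hc₂₂) k₂₂) hc hk

end Lex

/-- Let `A` be a po-group with RDP such that for any two non-comparable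
`a, b ∈ A⁺ \ {0}` there is `d'` with `0 < d' ≤ a`, `d' ≤ b`, `a + d' = d' + a` and
`b + d' = d' + b`. If `G` is a directed po-group with RDP, then the lexicographic product
`A ×ₗ G` satisfies RDP. -/
theorem rdp_lex_of_commuting_lower_bounds {A G : Type*}
    [AddGroup A] [PartialOrder A]
    [CovariantClass A A (· + ·) (· ≤ ·)]
    [CovariantClass A A (Function.swap (· + ·)) (· ≤ ·)]
    [AddGroup G] [PartialOrder G]
    [CovariantClass G G (· + ·) (· ≤ ·)]
    [CovariantClass G G (Function.swap (· + ·)) (· ≤ ·)]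
    (hA : RDP A)
    (hcom : ∀ a b : A, 0 ≤ a → a ≠ 0 → 0 ≤ b → b ≠ 0 → ¬ a ≤ b → ¬ b ≤ a →
      ∃ d' : A, 0 < d' ∧ d' ≤ a ∧ d' ≤ b ∧ a + d' = d' + a ∧ b + d' = d' + b)
    (hdir : ∀ x y : G, ∃ z : G, x ≤ z ∧ y ≤ z)
    (hG : RDP G) :
    RDP (A ×ₗ G) := by
  intro p₁ p₂ q₁ q₂ hp₁ hp₂ hq₁ hq₂ hsum
  obtain ⟨⟨a₁, g₁⟩, rfl⟩ := toLex.surjective p₁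
  obtain ⟨⟨a₂, g₂⟩, rfl⟩ := toLex.surjective p₂
  obtain ⟨⟨b₁, h₁⟩, rfl⟩ := toLex.surjective q₁
  obtain ⟨⟨b₂, h₂⟩, rfl⟩ := toLex.surjective q₂
  have ha : a₁ + a₂ = b₁ + b₂ := congrArg (fun p ↦ (ofLex p).1) hsum
  have hg : g₁ + g₂ = h₁ + h₂ := congrArg (fun p ↦ (ofLex p).2) hsum
  by_cases hlt : a₁ < b₁
  · exact hasRieszDecomp_of_neg_add_nonneg hp₁ hq₂ (neg_toLex_add_toLex_nonneg hlt g₁ h₁) hsum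
  by_cases hgt : b₁ < a₁
  · exact (hasRieszDecomp_of_neg_add_nonneg hq₁ hp₂ (neg_toLex_add_toLex_nonneg hgt h₁ g₁)
      hsum.symm).symm
  rcases eq_or_ne a₁ b₁ with rfl | hne
  · obtain rfl : a₂ = b₂ := add_left_cancel ha
    exact hasRieszDecomp_toLex_of_fst_eq hdir hG hp₁ hp₂ hq₁ hq₂ hg
  have hbound (a b : A) (ha : 0 ≤ a) (hb : 0 ≤ b) (hab : ¬ a ≤ b) (hba : ¬ b ≤ a) :
      ∃ d : A, 0 < d ∧ d ≤ a ∧ d ≤ b := by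
    obtain ⟨d, hd, hda, hdb, -⟩ :=
      hcom a b ha (by rintro rfl; exact hab hb) hb (by rintro rfl; exact hba ha) hab hba
    exact ⟨d, hd, hda, hdb⟩
  exact hasRieszDecomp_toLex_of_incomparable hA hbound hdir hG
    (fst_nonneg_of_toLex_nonneg hp₁) (fst_nonneg_of_toLex_nonneg hp₂)
    (fst_nonneg_of_toLex_nonneg hq₁) (fst_nonneg_of_toLex_nonneg hq₂)
    (fun h ↦ hlt (h.lt_of_ne hne)) (fun h ↦ hgt (h.lt_of_ne hne.symm)) ha hg
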